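/- Let n ≥ 2, let m_1, …, m_{n−1} be odd positive integers, let f_i ∈ C¹([0,∞)×ℝ^i; ℝ) for i = 1,…,n and a_i ∈ C¹([0,∞)×ℝ; ℝ) for i = 1,…,n−1, and define F : [0,∞)×ℝⁿ×ℝ → ℝⁿ componentwise by F_i(t,x,y) = f_i(t, y, x_2, …, x_i) + a_i(t,y)·x_{i+1}^{m_i} for i < n and F_n(t,x,y) = f_n(t, y, x_2, …, x_n). Let β : [0,∞)×[0,∞) → [0,∞) be continuous and nondecreasing in each argument, let R > 0 and ξ ≥ 1, and let σ : [0,∞) → [0,∞) be any function with σ(t) ≥ Σ_{i=2}^{n} Σ_{j=2}^{i} max{ |∂f_i/∂x_j (t, y, x_2, …, x_i)| : |(y, x_2, …, x_i)| ≤ 2β(t,R) + ξ } for all t ≥ 0. Then for all t ≥ 0, all y ∈ ℝ with |y| ≤ β(t,R), and all x, z ∈ ℝⁿ with |x| ≤ β(t,R) and |x − z| ≤ ξ, setting e := x − z, there exists q = (q_{i,j})_{1 ≤ j ≤ i ≤ n} ∈ ℝ^{n(n+1)/2} with |q| ≤ σ(t) and q_{i,1} = 0 for all i, such that F(t,x,y)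 − F(t,z,y) = A(t,q,x,e,y)·e, where A(t,q,x,e,y) is the n×n matrix whose (i,j) entry equals q_{i,j} for j ≤ i, equals a_i(t,y)·b_i(x_{i+1}, e_{i+1}) for j = i+1 (i ≤ n−1), and equals 0 for j > i+1, with b_i(α, β) := Σ_{j=0}^{m_i−1} α^j (α−β)^{m_i−1−j}. -/

import Mathlib

open Matrix

/-- Euclidean norm on `Fin k → ℝ`. -/
noncomputable def eunorm {k : ℕ} (x : Fin k → ℝ) : ℝ := Real.sqrt (∑ i, (x i) ^ 2)

/-- The polynomial `b(α,β) = Σ_{j=0}^{m−1} α^j (α−β)^{m−1−j}` from the factorization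
`x^m − z^m = b(x, x−z)·(x−z)`. -/
noncomputable def bpoly (m : ℕ) (α β : ℝ) : ℝ :=
  ∑ j ∈ Finset.range m, α ^ j * (α - β) ^ (m - 1 - j)

/-- The right-hand side of the triangular system expressed in terms of the output `y = x₁`:
`F_i(t,x,y) = f_i(t, y, x₂, …, x_i) + a_i(t,y)·x_{i+1}^{m_i}` for `i < n`, and
`F_n(t,x,y) = f_n(t, y, x₂, …, x_n)` (0-based indexing). -/
noncomputable def triF (n : ℕ) (f : Fin n → ℝ → (Fin n → ℝ) → ℝ)
    (a : Fin n → ℝ → ℝ → ℝ) (m : Fin n → ℕ)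
    (t : ℝ) (x : Fin n → ℝ) (y : ℝ) : Fin n → ℝ :=
  fun i =>
    if h : (i : ℕ) + 1 < n then
      f i t (Function.update x ⟨0, i.pos⟩ y) + a i t y * (x ⟨(i : ℕ) + 1, h⟩) ^ (m i)
    else f i t (Function.update x ⟨0, i.pos⟩ y)

lemma bpoly_mul (M : ℕ) (α γ : ℝ) : α ^ M - γ ^ M = bpoly M α (α - γ) * (α - γ) := by
  have h := geom_sum₂_mul α γ M
  unfold bpoly
  simp only [sub_sub_cancel]
  rw [← h]

lemma eunorm_nonneg {k : ℕ} (u : Fin k → ℝ) : 0 ≤ eunorm u := Real.sqrt_nonneg _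

lemma eunorm_mono {k : ℕ} (u w : Fin k → ℝ) (h : ∀ l, |u l| ≤ |w l|) : eunorm u ≤ eunorm w := by
  apply Real.sqrt_le_sqrt
  apply Finset.sum_le_sum
  intro l _
  rw [← sq_abs (u l), ← sq_abs (w l)]
  exact pow_le_pow_left₀ (abs_nonneg _) (h l) 2

lemma eunorm_eq {k : ℕ} (u : Fin k → ℝ) :
    eunorm u = ‖(WithLp.equiv 2 (Fin k → ℝ)).symm u‖ := by
  rw [EuclideanSpace.norm_eq]
  unfold eunorm
  congr 1
  apply Finset.sum_congr rfl
  intro l _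
  rw [Real.norm_eq_abs, sq_abs]
  rfl

lemma eunorm_add_le {k : ℕ} (u w : Fin k → ℝ) : eunorm (u + w) ≤ eunorm u + eunorm w := by
  rw [eunorm_eq, eunorm_eq, eunorm_eq]
  have : (WithLp.equiv 2 (Fin k → ℝ)).symm (u + w) =
      (WithLp.equiv 2 (Fin k → ℝ)).symm u + (WithLp.equiv 2 (Fin k → ℝ)).symm w := rfl
  rw [this]
  exact norm_add_le _ _

lemma mvt_coord {n : ℕ} (g : (Fin n → ℝ) → ℝ) (hg : Differentiable ℝ g)
    (p : Fin n → ℝ) (j : Fin n) (d : ℝ) :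
    ∃ s ∈ Set.Icc (0:ℝ) 1,
      g (p + (Pi.single j d : Fin n → ℝ)) - g p =
        fderiv ℝ g (p + s • (Pi.single j d : Fin n → ℝ)) ((Pi.single j 1 : Fin n → ℝ)) * d := by
  set v : Fin n → ℝ := Pi.single j d with hv
  have hderiv : ∀ s : ℝ, HasDerivAt (fun s : ℝ => g (p + s • v))
      (fderiv ℝ g (p + s • v) v) s := by
    intro s
    have h1 : HasDerivAt (fun s : ℝ => p + s • v) v s := by
      simpa using ((hasDerivAt_id s).smul_const v).const_add p
    exact (hg (p + s • v)).hasFDerivAt.comp_hasDerivAt s h1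
  obtain ⟨c, hc, hceq⟩ := exists_hasDerivAt_eq_slope (fun s : ℝ => g (p + s • v))
    (fun s => fderiv ℝ g (p + s • v) v) one_pos
    (fun s _ => (hderiv s).continuousAt.continuousWithinAt)
    (fun s _ => hderiv s)
  refine ⟨c, ⟨le_of_lt hc.1, le_of_lt hc.2⟩, ?_⟩
  have key : fderiv ℝ g (p + c • v) v = g (p + v) - g p := by
    rw [hceq]; simp
  have hv2 : v = d • (Pi.single j 1 : Fin n → ℝ) := by
    ext l
    by_cases h : l = j <;> simp [hv, h, Pi.single_apply]
  rw [← key, hv2, ContinuousLinearMap.map_smul, smul_eq_mul, mul_comm]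

lemma sum_sq_le_sq_sum_abs {ι : Type*} (s : Finset ι) (f : ι → ℝ) :
    ∑ i ∈ s, (f i) ^ 2 ≤ (∑ i ∈ s, |f i|) ^ 2 := by
  have h1 : ∀ i ∈ s, (f i) ^ 2 ≤ |f i| * ∑ j ∈ s, |f j| := by
    intro i hi
    rw [← sq_abs]
    have : |f i| ≤ ∑ j ∈ s, |f j| :=
      Finset.single_le_sum (fun j _ => abs_nonneg (f j)) hi
    nlinarith [abs_nonneg (f i)]
  calc ∑ i ∈ s, (f i) ^ 2 ≤ ∑ i ∈ s, |f i| * ∑ j ∈ s, |f j| := Finset.sum_le_sum h1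
    _ = (∑ i ∈ s, |f i|) ^ 2 := by rw [← Finset.sum_mul]; ring

/-- Verification of Hypothesis A1 for the triangular system: the difference
`F(t,x,y) − F(t,z,y)` factors through a lower-triangular-plus-superdiagonal matrix `A(t,q,x,e,y)`
with `q_{i,1} = 0`, `|q| ≤ σ(t)`, the superdiagonal entries being `a_i(t,y)·b_i(x_{i+1},e_{i+1})`. -/
theorem stmt16
    (n : ℕ) (hn : 2 ≤ n)
    (f : Fin n → ℝ → (Fin n → ℝ) → ℝ)
    (a : Fin n → ℝ → ℝ → ℝ)
    (m : Fin n → ℕ)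
    (hmodd : ∀ i : Fin n, (i : ℕ) + 1 < n → Odd (m i))
    (hmpos : ∀ i : Fin n, (i : ℕ) + 1 < n → 0 < m i)
    (hfreg : ∀ i, ContDiffOn ℝ 1 (fun p : ℝ × (Fin n → ℝ) => f i p.1 p.2)
        (Set.Ici 0 ×ˢ Set.univ))
    (hftri : ∀ (i : Fin n) (t : ℝ) (x x' : Fin n → ℝ),
        (∀ j : Fin n, (j : ℕ) ≤ (i : ℕ) → x j = x' j) → f i t x = f i t x')
    (hareg : ∀ i : Fin n, (i : ℕ) + 1 < n →
        ContDiffOn ℝ 1 (fun p : ℝ × ℝ => a i p.1 p.2) (Set.Ici 0 ×ˢ Set.univ))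
    (β : ℝ → ℝ → ℝ)
    (hβcont : Continuous fun p : ℝ × ℝ => β p.1 p.2)
    (hβmono : ∀ t₁ t₂ s₁ s₂ : ℝ, t₁ ≤ t₂ → s₁ ≤ s₂ → β t₁ s₁ ≤ β t₂ s₂)
    (hβ0 : ∀ t s, 0 ≤ β t s)
    (R ξ : ℝ) (hR : 0 < R) (hξ : 1 ≤ ξ)
    (σ : ℝ → ℝ)
    (hσ : ∀ t, 0 ≤ t → ∀ v : Fin n → Fin n → (Fin n → ℝ),
      (∀ i j, eunorm (v i j) ≤ 2 * β t R + ξ) →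
      (∑ i : Fin n, ∑ j : Fin n,
        if 1 ≤ (j : ℕ) ∧ (j : ℕ) ≤ (i : ℕ) then
          |fderiv ℝ (f i t) (v i j) (Pi.single j 1)| else 0) ≤ σ t) :
    ∀ t, 0 ≤ t → ∀ y : ℝ, |y| ≤ β t R → ∀ x z : Fin n → ℝ,
      eunorm x ≤ β t R → eunorm (x - z) ≤ ξ →
      ∃ q : Matrix (Fin n) (Fin n) ℝ,
        (∀ i j : Fin n, (i : ℕ) < (j : ℕ) → q i j = 0) ∧
        (∀ i : Fin n, q i ⟨0, i.pos⟩ = 0) ∧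
        Real.sqrt (∑ i, ∑ j, (q i j) ^ 2) ≤ σ t ∧
        triF n f a m t x y - triF n f a m t z y =
          (Matrix.of fun i j : Fin n =>
            if (j : ℕ) ≤ (i : ℕ) then q i j
            else if (j : ℕ) = (i : ℕ) + 1 then a i t y * bpoly (m i) (x j) (x j - z j)
            else 0).mulVec (x - z) := by
  intro t ht y hy x z hx he
  have hB0 : 0 ≤ β t R := hβ0 t R
  -- differentiability of the slices
  have hdiff : ∀ i : Fin n, Differentiable ℝ (f i t) := by
    intro i w
    have h1 : DifferentiableWithinAt ℝ (fun p : ℝ × (Fin n → ℝ) => f i p.1 p.2)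
        (Set.Ici 0 ×ˢ Set.univ) (t, w) :=
      ((hfreg i).differentiableOn one_ne_zero) (t, w) ⟨ht, trivial⟩
    have h2 : DifferentiableWithinAt ℝ (fun w' : Fin n → ℝ => ((t, w') : ℝ × (Fin n → ℝ)))
        Set.univ w :=
      (DifferentiableAt.prodMk (differentiableAt_const t) differentiableAt_id).differentiableWithinAt
    have h3 := h1.comp w h2 (fun w' _ => ⟨ht, trivial⟩)
    have h4 : DifferentiableAt ℝ (fun w' : Fin n → ℝ => f i t w') w :=
      differentiableWithinAt_univ.mp h3
    exact h4
  -- the interpolation points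
  set P : ℕ → Fin n → ℝ := fun k l => if (l : ℕ) = 0 then y else if (l : ℕ) ≤ k then x l else z l
    with hP
  have hP0 : ∀ h0 : 0 < n, P 0 = Function.update z ⟨0, h0⟩ y := by
    intro h0; funext l
    rcases eq_or_ne ((l : ℕ)) 0 with h | h
    · have hl : l = ⟨0, h0⟩ := Fin.ext h
      rw [hl]
      simp [hP]
    · have hl : l ≠ ⟨0, h0⟩ := fun hc => h (by rw [hc])
      simp [hP, h, Function.update_of_ne hl]
  have hPstep : ∀ (k : ℕ) (j : Fin n), (j : ℕ) = k + 1 →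
      P (k + 1) = P k + (Pi.single j (x j - z j) : Fin n → ℝ) := by
    intro k j hj; funext l
    simp only [Pi.add_apply, Pi.single_apply, hP]
    by_cases hlj : l = j
    · have hval : (l : ℕ) = k + 1 := by rw [hlj]; exact hj
      have h1 : ¬((l : ℕ) = 0) := by omega
      have h2 : (l : ℕ) ≤ k + 1 := by omega
      have h3 : ¬((l : ℕ) ≤ k) := by omega
      simp only [if_neg h1, if_pos h2, if_neg h3, if_pos hlj]
      rw [hlj]; ring
    · have hvl : (l : ℕ) ≠ k + 1 := by
        intro hc; exact hlj (Fin.ext (by rw [hc, hj]))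
      simp only [if_neg hlj, add_zero]
      split_ifs <;> first | rfl | (exfalso; omega)
  -- mean value points
  have hmvt : ∀ (i jj : Fin n), ∃ cc : Fin n → ℝ,
      (∃ s ∈ Set.Icc (0:ℝ) 1,
        cc = P ((jj : ℕ) - 1) + s • (Pi.single jj (x jj - z jj) : Fin n → ℝ)) ∧
      f i t (P ((jj : ℕ) - 1) + (Pi.single jj (x jj - z jj) : Fin n → ℝ))
          - f i t (P ((jj : ℕ) - 1)) =
        fderiv ℝ (f i t) cc ((Pi.single jj 1 : Fin n → ℝ)) * (x jj - z jj) := by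
    intro i jj
    obtain ⟨s, hs, hmv⟩ := mvt_coord (f i t) (hdiff i) (P ((jj : ℕ) - 1)) jj (x jj - z jj)
    exact ⟨_, ⟨s, hs, rfl⟩, hmv⟩
  set c : Fin n → Fin n → (Fin n → ℝ) := fun i jj => Classical.choose (hmvt i jj) with hcdef
  have hcspec : ∀ i jj : Fin n,
      (∃ s ∈ Set.Icc (0:ℝ) 1,
        c i jj = P ((jj : ℕ) - 1) + s • (Pi.single jj (x jj - z jj) : Fin n → ℝ)) ∧
      f i t (P ((jj : ℕ) - 1) + (Pi.single jj (x jj - z jj) : Fin n → ℝ))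
          - f i t (P ((jj : ℕ) - 1)) =
        fderiv ℝ (f i t) (c i jj) ((Pi.single jj 1 : Fin n → ℝ)) * (x jj - z jj) :=
    fun i jj => Classical.choose_spec (hmvt i jj)
  -- norm bound for the mean value points
  have hcnorm : ∀ (i jj : Fin n), 1 ≤ (jj : ℕ) → eunorm (c i jj) ≤ 2 * β t R + ξ := by
    intro i jj hjj
    obtain ⟨⟨s, hs, hceq⟩, -⟩ := hcspec i jj
    have h0n : 0 < n := by omega
    set X : Fin n → ℝ := Function.update x ⟨0, h0n⟩ y with hX
    have hsplit : c i jj = X + (c i jj - X) := by ring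
    have hXnorm : eunorm X ≤ 2 * β t R := by
      have hsum : ∑ l, (X l) ^ 2 ≤ (2 * β t R) ^ 2 := by
        have hxsum : ∑ l, (x l) ^ 2 ≤ (β t R) ^ 2 := by
          have h1 : Real.sqrt (∑ l, (x l) ^ 2) ≤ β t R := hx
          have h2 : (0:ℝ) ≤ ∑ l, (x l) ^ 2 :=
            Finset.sum_nonneg fun l _ => sq_nonneg _
          nlinarith [Real.sq_sqrt h2, Real.sqrt_nonneg (∑ l, (x l) ^ 2)]
        have hupdate : ∑ l, (X l) ^ 2 = y ^ 2 + ∑ l ∈ (Finset.univ \ {⟨0, h0n⟩} : Finset (Fin n)), (x l) ^ 2 := by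
          have : (fun l => (X l) ^ 2) = Function.update (fun l => (x l) ^ 2) ⟨0, h0n⟩ (y ^ 2) := by
            funext l
            rcases eq_or_ne l ⟨0, h0n⟩ with rfl | hl
            · simp [hX]
            · simp [hX, Function.update_of_ne hl]
          rw [this, Finset.sum_update_of_mem (Finset.mem_univ _)]
        have herase : ∑ l ∈ (Finset.univ \ {⟨0, h0n⟩} : Finset (Fin n)), (x l) ^ 2 ≤ ∑ l, (x l) ^ 2 :=
          Finset.sum_le_sum_of_subset_of_nonneg Finset.sdiff_subset
            (fun l _ _ => sq_nonneg _)
        have hy2 : y ^ 2 ≤ (β t R) ^ 2 := by nlinarith [abs_nonneg y, sq_abs y]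
        rw [hupdate]
        nlinarith
      calc eunorm X ≤ Real.sqrt ((2 * β t R) ^ 2) := Real.sqrt_le_sqrt hsum
        _ = 2 * β t R := Real.sqrt_sq (by linarith)
    have hWnorm : eunorm (c i jj - X) ≤ ξ := by
      have := eunorm_mono (c i jj - X) (x - z) ?_
      · exact le_trans this he
      intro l
      have hval : (c i jj - X) l = P ((jj : ℕ) - 1) l
          + s * (Pi.single jj (x jj - z jj) : Fin n → ℝ) l - X l := by
        rw [hceq]; simp
      rw [hval]
      simp only [hP, hX, Pi.single_apply, Pi.sub_apply, Function.update_apply]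
      rcases eq_or_ne ((l : ℕ)) 0 with h0 | h0
      · have hl0 : l = (⟨0, h0n⟩ : Fin n) := Fin.ext h0
        have hlj : (⟨0, h0n⟩ : Fin n) ≠ jj := by
          intro hc; rw [← hc] at hjj; simp at hjj
        simp [h0, hl0, hlj]
        all_goals positivity
      · have hlne : l ≠ (⟨0, h0n⟩ : Fin n) := fun hc => h0 (by rw [hc])
        rcases eq_or_ne l jj with rfl | hlj
        · have h3 : ¬((l : ℕ) ≤ (l : ℕ) - 1) := by omega
          simp only [h0, if_false, h3, hlne, if_true]
          have : z l + s * (x l - z l) - x l = (s - 1) * (x l - z l) := by ring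
          rw [this, abs_mul]
          have hs1 : |s - 1| ≤ 1 := by
            have h01 := hs.1
            have h02 := hs.2
            rw [abs_le]
            constructor <;> linarith
          nlinarith [abs_nonneg (x l - z l)]
        · simp only [h0, if_false, hlj, hlne, if_true, mul_zero, add_zero]
          rcases le_or_gt ((l : ℕ)) ((jj : ℕ) - 1) with h4 | h4
          · simp [h4]
          · rw [if_neg (by omega)]
            rw [abs_sub_comm]
    calc eunorm (c i jj) = eunorm (X + (c i jj - X)) := by rw [← hsplit]
      _ ≤ eunorm X + eunorm (c i jj - X) := eunorm_add_le _ _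
      _ ≤ 2 * β t R + ξ := by linarith
  -- the matrix q
  set q : Matrix (Fin n) (Fin n) ℝ := Matrix.of fun i jj =>
      if 1 ≤ (jj : ℕ) ∧ (jj : ℕ) ≤ (i : ℕ) then
        fderiv ℝ (f i t) (c i jj) (Pi.single jj 1) else 0 with hqdef
  have hq_apply : ∀ i jj, q i jj =
      if 1 ≤ (jj : ℕ) ∧ (jj : ℕ) ≤ (i : ℕ) then
        fderiv ℝ (f i t) (c i jj) (Pi.single jj 1) else 0 := fun i jj => rfl
  -- the test points for hσ
  set v : Fin n → Fin n → (Fin n → ℝ) := fun i jj => if 1 ≤ (jj : ℕ) then c i jj else 0 with hvdef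
  have hvnorm : ∀ i jj, eunorm (v i jj) ≤ 2 * β t R + ξ := by
    intro i jj
    by_cases h : 1 ≤ (jj : ℕ)
    · simp only [hvdef, if_pos h]; exact hcnorm i jj h
    · simp only [hvdef, if_neg h]
      have : eunorm (0 : Fin n → ℝ) = 0 := by simp [eunorm]
      rw [this]; linarith
  have habs_sum : (∑ i : Fin n, ∑ jj : Fin n, |q i jj|) ≤ σ t := by
    have h1 := hσ t ht v hvnorm
    have h2 : (∑ i : Fin n, ∑ jj : Fin n, |q i jj|) =
        ∑ i : Fin n, ∑ jj : Fin n,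
          if 1 ≤ (jj : ℕ) ∧ (jj : ℕ) ≤ (i : ℕ) then
            |fderiv ℝ (f i t) (v i jj) (Pi.single jj 1)| else 0 := by
      apply Finset.sum_congr rfl; intro i _
      apply Finset.sum_congr rfl; intro jj _
      rw [hq_apply]
      by_cases h : 1 ≤ (jj : ℕ) ∧ (jj : ℕ) ≤ (i : ℕ)
      · rw [if_pos h, if_pos h]
        congr 2
        simp only [hvdef, if_pos h.1]
      · rw [if_neg h, if_neg h, abs_zero]
    rw [h2]; exact h1
  have hsq : Real.sqrt (∑ i, ∑ jj, (q i jj) ^ 2) ≤ σ t := by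
    have h1 : (∑ i : Fin n, ∑ jj : Fin n, (q i jj) ^ 2) ≤
        (∑ i : Fin n, ∑ jj : Fin n, |q i jj|) ^ 2 := by
      rw [← Finset.sum_product', ← Finset.sum_product']
      exact sum_sq_le_sq_sum_abs _ _
    have h3 : (0:ℝ) ≤ ∑ i : Fin n, ∑ jj : Fin n, |q i jj| :=
      Finset.sum_nonneg fun i _ => Finset.sum_nonneg fun jj _ => abs_nonneg _
    calc Real.sqrt (∑ i, ∑ jj, (q i jj) ^ 2) ≤
        Real.sqrt ((∑ i : Fin n, ∑ jj : Fin n, |q i jj|) ^ 2) := Real.sqrt_le_sqrt h1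
      _ = ∑ i : Fin n, ∑ jj : Fin n, |q i jj| := Real.sqrt_sq h3
      _ ≤ σ t := habs_sum
  -- the telescoping key identity
  have key : ∀ (i : Fin n) (k : ℕ), k < n →
      (∑ jj : Fin n, if 1 ≤ (jj : ℕ) ∧ (jj : ℕ) ≤ k then
        fderiv ℝ (f i t) (c i jj) (Pi.single jj 1) * (x jj - z jj) else 0)
      = f i t (P k) - f i t (P 0) := by
    intro i k
    induction k with
    | zero =>
      intro _
      rw [sub_self]
      apply Finset.sum_eq_zero
      intro jj _
      rw [if_neg (by omega)]
    | succ k ih =>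
      intro hk1
      have hk : k < n := by omega
      set j0 : Fin n := ⟨k + 1, hk1⟩ with hj0
      have hsplit : ∀ jj : Fin n,
          (if 1 ≤ (jj : ℕ) ∧ (jj : ℕ) ≤ k + 1 then
            fderiv ℝ (f i t) (c i jj) (Pi.single jj 1) * (x jj - z jj) else 0)
          = (if 1 ≤ (jj : ℕ) ∧ (jj : ℕ) ≤ k then
            fderiv ℝ (f i t) (c i jj) (Pi.single jj 1) * (x jj - z jj) else 0)
          + (if jj = j0 then
            fderiv ℝ (f i t) (c i jj) (Pi.single jj 1) * (x jj - z jj) else 0) := by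
        intro jj
        by_cases hje : jj = j0
        · have hval : (jj : ℕ) = k + 1 := by rw [hje]
          have hc1 : 1 ≤ (jj : ℕ) ∧ (jj : ℕ) ≤ k + 1 := by omega
          have hc2 : ¬(1 ≤ (jj : ℕ) ∧ (jj : ℕ) ≤ k) := by omega
          rw [if_pos hc1, if_neg hc2, if_pos hje]
          ring
        · have hne' : (jj : ℕ) ≠ k + 1 := by
            intro hcon; exact hje (Fin.ext (by rw [hcon]))
          rw [if_neg hje]
          have hiff : (1 ≤ (jj : ℕ) ∧ (jj : ℕ) ≤ k + 1) ↔ (1 ≤ (jj : ℕ) ∧ (jj : ℕ) ≤ k) := by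
            omega
          simp only [hiff, add_zero]
      rw [Finset.sum_congr rfl (fun jj _ => hsplit jj), Finset.sum_add_distrib, ih hk,
        Finset.sum_ite_eq' Finset.univ j0]
      simp only [Finset.mem_univ, if_true]
      have hTj0 : fderiv ℝ (f i t) (c i j0) (Pi.single j0 1) * (x j0 - z j0)
          = f i t (P (k + 1)) - f i t (P k) := by
        have hspec := (hcspec i j0).2
        have hval : ((j0 : ℕ) - 1) = k := rfl
        rw [hval] at hspec
        rw [← hspec, ← hPstep k j0 rfl]
      rw [hTj0]; ring
  refine ⟨q, ?_, ?_, hsq, ?_⟩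
  · intro i jj hij
    rw [hq_apply, if_neg (by omega)]
  · intro i
    rw [hq_apply, if_neg (by simp)]
  · funext i
    have hlt : (i : ℕ) < n := i.is_lt
    rw [Pi.sub_apply]
    have hmv : (Matrix.of fun i jj : Fin n =>
        if (jj : ℕ) ≤ (i : ℕ) then q i jj
        else if (jj : ℕ) = (i : ℕ) + 1 then a i t y * bpoly (m i) (x jj) (x jj - z jj)
        else 0).mulVec (x - z) i =
      ∑ jj : Fin n, (if (jj : ℕ) ≤ (i : ℕ) then q i jj
        else if (jj : ℕ) = (i : ℕ) + 1 then a i t y * bpoly (m i) (x jj) (x jj - z jj)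
        else 0) * (x jj - z jj) := by
      simp only [Matrix.mulVec, dotProduct, Pi.sub_apply, Matrix.of_apply]
    rw [hmv]
    have hterm : ∀ jj : Fin n,
        (if (jj : ℕ) ≤ (i : ℕ) then q i jj
          else if (jj : ℕ) = (i : ℕ) + 1 then a i t y * bpoly (m i) (x jj) (x jj - z jj)
          else 0) * (x jj - z jj)
        = (if 1 ≤ (jj : ℕ) ∧ (jj : ℕ) ≤ (i : ℕ) then
            fderiv ℝ (f i t) (c i jj) (Pi.single jj 1) * (x jj - z jj) else 0)
        + (if (jj : ℕ) = (i : ℕ) + 1 then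
            a i t y * bpoly (m i) (x jj) (x jj - z jj) * (x jj - z jj) else 0) := by
      intro jj
      by_cases h1 : (jj : ℕ) ≤ (i : ℕ)
      · have hne2 : ¬((jj : ℕ) = (i : ℕ) + 1) := by omega
        rw [if_pos h1, if_neg hne2, add_zero, hq_apply, ite_mul, zero_mul]
      · have hq0 : ¬(1 ≤ (jj : ℕ) ∧ (jj : ℕ) ≤ (i : ℕ)) := by omega
        rw [if_neg h1, if_neg hq0, zero_add]
        by_cases h2 : (jj : ℕ) = (i : ℕ) + 1
        · rw [if_pos h2, if_pos h2]
        · rw [if_neg h2, if_neg h2, zero_mul]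
    rw [Finset.sum_congr rfl (fun jj _ => hterm jj), Finset.sum_add_distrib, key i (i : ℕ) hlt]
    have hPX : f i t (P (i : ℕ)) = f i t (Function.update x ⟨0, i.pos⟩ y) := by
      apply hftri
      intro jj hjj
      rcases eq_or_ne ((jj : ℕ)) 0 with h0 | h0
      · have hj' : jj = (⟨0, i.pos⟩ : Fin n) := Fin.ext h0
        rw [hj']
        simp [hP]
      · have hne : jj ≠ (⟨0, i.pos⟩ : Fin n) := fun hc => h0 (by rw [hc])
        simp [hP, h0, hjj, Function.update_of_ne hne]
    have hPZ : f i t (P 0) = f i t (Function.update z ⟨0, i.pos⟩ y) := by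
      rw [hP0 i.pos]
    rw [hPX, hPZ]
    unfold triF
    by_cases h : (i : ℕ) + 1 < n
    · rw [dif_pos h, dif_pos h]
      set j1 : Fin n := ⟨(i : ℕ) + 1, h⟩ with hj1
      have hsum2 : (∑ jj : Fin n, if (jj : ℕ) = (i : ℕ) + 1 then
          a i t y * bpoly (m i) (x jj) (x jj - z jj) * (x jj - z jj) else 0)
          = a i t y * bpoly (m i) (x j1) (x j1 - z j1) * (x j1 - z j1) := by
        have : ∀ jj : Fin n, ((jj : ℕ) = (i : ℕ) + 1) ↔ jj = j1 := by
          intro jj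
          constructor
          · intro hcon; exact Fin.ext hcon
          · intro hcon; rw [hcon]
        rw [Finset.sum_congr rfl (fun jj _ => by rw [if_congr (this jj) rfl rfl]),
          Finset.sum_ite_eq' Finset.univ j1]
        simp
      rw [hsum2]
      have hbp := bpoly_mul (m i) (x j1) (z j1)
      linear_combination a i t y * hbp
    · rw [dif_neg h, dif_neg h]
      have hsum2 : (∑ jj : Fin n, if (jj : ℕ) = (i : ℕ) + 1 then
          a i t y * bpoly (m i) (x jj) (x jj - z jj) * (x jj - z jj) else 0) = 0 := by
        apply Finset.sum_eq_zero
        intro jj _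
        rw [if_neg (by have := jj.is_lt; omega)]
      rw [hsum2, add_zero]
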